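/- Let λ₁ and λ₂ be two distinct points of 𝔻 and let ω₁, ω₂ ∈ 𝔻, and let P be the 2×2 Pick matrix with (i,j)-entry (1−ω_i·conj(ω_j))/(1−λ_i·conj(λ_j)). Then P is positive semi-definite if and only if its entrywise (Schur) square P⊙P, the matrix with (i,j)-entry (1−ω_i·conj(ω_j))²/(1−λ_i·conj(λ_j))², is positive semi-definite. -/

import Mathlib

/-!
With `a = (1 - |ω₁|²)/(1 - |λ₁|²) > 0`, `d = (1 - |ω₂|²)/(1 - |λ₂|²) > 0` and `b` the off-diagonal
entry, the Pick matrix is `!![a, b; b̄, d]` and its Schur square is `!![a², b²; b̄², d²]`.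
A Hermitian 2×2 matrix with positive upper-left entry is positive semidefinite iff
`|b|² ≤ a d` (determinant one way, completing the square the other), and `|b|⁴ ≤ a² d²` iff
`|b|² ≤ a d`.
-/

open Complex ComplexConjugate ComplexOrder
open Matrix

namespace Matrix

lemma isHermitian_fin_two (a d : ℝ) (b : ℂ) : !![(a : ℂ), b; conj b, (d : ℂ)].IsHermitian := by
  ext i j
  fin_cases i <;> fin_cases j <;> simp

lemma dotProduct_mulVec_fin_two_eq {a d : ℝ} (ha : a ≠ 0) (b : ℂ) (x : Fin 2 → ℂ) :
    star x ⬝ᵥ (!![(a : ℂ), b; conj b, (d : ℂ)] *ᵥ x) =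
      ((normSq (a * x 0 + b * x 1) + (a * d - normSq b) * normSq (x 1)) / a : ℝ) := by
  push_cast
  simp only [normSq_eq_conj_mul_self, dotProduct, mulVec, Fin.sum_univ_two, of_apply,
    cons_val', cons_val_zero, cons_val_one, empty_val', cons_val_fin_one, Pi.star_apply,
    RCLike.star_def, map_add, map_mul, conj_ofReal]
  field_simp
  ring

lemma posSemidef_fin_two_iff {a d : ℝ} (ha : 0 < a) (b : ℂ) :
    !![(a : ℂ), b; conj b, (d : ℂ)].PosSemidef ↔ normSq b ≤ a * d := by
  constructor
  · intro h
    have hdet := h.det_nonneg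
    rwa [det_fin_two_of, mul_conj, ← ofReal_mul, ← ofReal_sub, zero_le_real, sub_nonneg] at hdet
  · intro h
    refine posSemidef_iff_dotProduct_mulVec.mpr ⟨isHermitian_fin_two a d b, fun x => ?_⟩
    rw [dotProduct_mulVec_fin_two_eq ha.ne', zero_le_real]
    have hx1 := normSq_nonneg (x 1)
    have hsq := normSq_nonneg (a * x 0 + b * x 1)
    have hgap : 0 ≤ a * d - normSq b := sub_nonneg.mpr h
    positivity

lemma hadamard_self_posSemidef_fin_two_iff {a d : ℝ} (ha : 0 < a) (hd : 0 ≤ d) (b : ℂ) :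
    (!![(a : ℂ), b; conj b, (d : ℂ)] ⊙ !![(a : ℂ), b; conj b, (d : ℂ)]).PosSemidef ↔
      !![(a : ℂ), b; conj b, (d : ℂ)].PosSemidef := by
  have hsq : !![(a : ℂ), b; conj b, (d : ℂ)] ⊙ !![(a : ℂ), b; conj b, (d : ℂ)] =
      !![((a ^ 2 : ℝ) : ℂ), b ^ 2; conj (b ^ 2), ((d ^ 2 : ℝ) : ℂ)] := by
    ext i j
    fin_cases i <;> fin_cases j <;> simp [sq]
  rw [hsq, posSemidef_fin_two_iff (pow_pos ha 2), posSemidef_fin_two_iff ha, map_pow, ← mul_pow]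
  exact pow_le_pow_iff_left₀ (normSq_nonneg b) (mul_nonneg ha.le hd) two_ne_zero

end Matrix

lemma Complex.one_sub_normSq_pos {z : ℂ} (hz : ‖z‖ < 1) : 0 < 1 - normSq z := by
  rw [sub_pos, normSq_eq_norm_sq]
  exact pow_lt_one₀ (norm_nonneg z) hz two_ne_zero

noncomputable def pickMatrix {ι : Type*} (l w : ι → ℂ) : Matrix ι ι ℂ :=
  of fun i j => (1 - w i * conj (w j)) / (1 - l i * conj (l j))

lemma pickMatrix_hadamard_self {ι : Type*} (l w : ι → ℂ) :
    pickMatrix l w ⊙ pickMatrix l w =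
      of fun i j => (1 - w i * conj (w j)) ^ 2 / (1 - l i * conj (l j)) ^ 2 := by
  ext i j
  rw [hadamard_apply, ← sq, pickMatrix, of_apply, of_apply, div_pow]

lemma pickMatrix_fin_two (l1 l2 w1 w2 : ℂ) :
    pickMatrix ![l1, l2] ![w1, w2] =
      !![(((1 - normSq w1) / (1 - normSq l1) : ℝ) : ℂ), (1 - w1 * conj w2) / (1 - l1 * conj l2);
        conj ((1 - w1 * conj w2) / (1 - l1 * conj l2)),
        (((1 - normSq w2) / (1 - normSq l2) : ℝ) : ℂ)] := by
  ext i j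
  fin_cases i <;> fin_cases j <;> simp [pickMatrix, mul_conj, mul_comm]

theorem pick_posSemidef_iff_schur_square_general (l1 l2 w1 w2 : ℂ)
    (hl1 : ‖l1‖ < 1) (hl2 : ‖l2‖ < 1)
    (hw1 : ‖w1‖ < 1) (hw2 : ‖w2‖ < 1) :
    (Matrix.of fun i j : Fin 2 =>
        (1 - ![w1, w2] i * conj (![w1, w2] j)) /
          (1 - ![l1, l2] i * conj (![l1, l2] j))).PosSemidef
      ↔ (Matrix.of fun i j : Fin 2 =>
          (1 - ![w1, w2] i * conj (![w1, w2] j)) ^ 2 /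
            (1 - ![l1, l2] i * conj (![l1, l2] j)) ^ 2).PosSemidef := by
  rw [← pickMatrix_hadamard_self]
  change (pickMatrix ![l1, l2] ![w1, w2]).PosSemidef ↔ _
  rw [pickMatrix_fin_two]
  exact (hadamard_self_posSemidef_fin_two_iff
    (div_pos (one_sub_normSq_pos hw1) (one_sub_normSq_pos hl1))
    (div_pos (one_sub_normSq_pos hw2) (one_sub_normSq_pos hl2)).le _).symm

/-- A 2×2 Pick matrix is positive semi-definite iff its Schur (entrywise) square
is positive semi-definite. -/
theorem pick_posSemidef_iff_schur_square (l1 l2 w1 w2 : ℂ)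
    (hl1 : ‖l1‖ < 1) (hl2 : ‖l2‖ < 1) (hne : l1 ≠ l2)
    (hw1 : ‖w1‖ < 1) (hw2 : ‖w2‖ < 1) :
    (Matrix.of fun i j : Fin 2 =>
        (1 - ![w1, w2] i * conj (![w1, w2] j)) /
          (1 - ![l1, l2] i * conj (![l1, l2] j))).PosSemidef
      ↔ (Matrix.of fun i j : Fin 2 =>
          (1 - ![w1, w2] i * conj (![w1, w2] j)) ^ 2 /
            (1 - ![l1, l2] i * conj (![l1, l2] j)) ^ 2).PosSemidef :=
  pick_posSemidef_iff_schur_square_general l1 l2 w1 w2 hl1 hl2 hw1 hw2
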